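/- arXiv:1211.5506 — 5 statements merged into one kernel-verified Lean document; each statement's English description precedes it below -/
import Mathlib

section
/- Any polynomial that is a finite product of factors of the form (1+t) and (1 + c t + t^2) with real c ≥ 2 has the mountain property: its coefficients strictly increase up to the middle coefficient(s), i.e. if the product has degree n with coefficients a_0, ..., a_n, then a_i < a_{i+1} whenever i+1 ≤ n/2. -/
open Polynomial

/-!
Write `a_k` for the coefficients of a palindromic `p` of degree `n`, with `a_{-1} = 0`. The claim,
together with `a_0 > 0`, says that the jumps `a_k - a_{k-1}`, i.e. the coefficients of
`(1 - X) * p`, are positive for `2 k ≤ n`. Multiplying `p` by `1 + X` replaces each jump by the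
sum of two consecutive ones, and by symmetry the jump just past the middle is `0`, so positivity
reaches the new middle. For `c ≥ 2`, `1 + c X + X ^ 2 = (1 + X) ^ 2 + (c - 2) X`, and the second
summand only adds the shifted jumps of `p`, which are nonnegative.
-/

namespace Polynomial

section CoeffUpToHalf

variable {R : Type*} [Semiring R] [PartialOrder R]

def CoeffPosUpToHalf (n : ℕ) (d : R[X]) : Prop :=
  ∀ k, 2 * k ≤ n → 0 < d.coeff k

def CoeffNonnegUpToHalf (n : ℕ) (d : R[X]) : Prop :=
  ∀ k, 2 * k ≤ n → 0 ≤ d.coeff k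

variable {n : ℕ} {d e : R[X]}

theorem CoeffPosUpToHalf.ne_zero (h : CoeffPosUpToHalf n d) : d ≠ 0 := by
  rintro rfl
  simpa using h 0 (Nat.zero_le n)

theorem CoeffPosUpToHalf.add_nonneg [IsOrderedRing R] (hd : CoeffPosUpToHalf n d)
    (he : CoeffNonnegUpToHalf n e) : CoeffPosUpToHalf n (d + e) := fun k hk => by
  rw [coeff_add]
  exact add_pos_of_pos_of_nonneg (hd k hk) (he k hk)

theorem CoeffNonnegUpToHalf.C_mul [IsOrderedRing R] {c : R} (hc : 0 ≤ c)
    (h : CoeffNonnegUpToHalf n d) : CoeffNonnegUpToHalf n (C c * d) := fun k hk => by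
  rw [coeff_C_mul]
  exact mul_nonneg hc (h k hk)

theorem CoeffPosUpToHalf.X_mul (h : CoeffPosUpToHalf n d) :
    CoeffNonnegUpToHalf (n + 2) (X * d) := by
  rintro (_ | k) hk
  · simp
  · rw [coeff_X_mul]
    exact (h k (by omega)).le

theorem CoeffPosUpToHalf.one_add_X_mul [IsOrderedRing R] (hpos : CoeffPosUpToHalf n d)
    (hnonneg : CoeffNonnegUpToHalf (n + 1) d) : CoeffPosUpToHalf (n + 1) ((1 + X) * d) := by
  rintro (_ | k) hk
  · simpa [add_mul] using hpos 0 (Nat.zero_le n)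
  · rw [add_mul, one_mul, coeff_add, coeff_X_mul, add_comm]
    exact add_pos_of_pos_of_nonneg (hpos k (by omega)) (hnonneg _ hk)

end CoeffUpToHalf

section Ring

variable {R : Type*} [Ring R]

theorem coeff_one_sub_X_mul_succ (p : R[X]) (k : ℕ) :
    ((1 - X) * p).coeff (k + 1) = p.coeff (k + 1) - p.coeff k := by
  rw [sub_mul, one_mul, coeff_sub, coeff_X_mul]

theorem coeff_one_sub_X_mul_eq_zero_of_reverse_eq {p : R[X]} (hp : p.reverse = p) {k : ℕ}
    (hk : 2 * k = p.natDegree + 1) : ((1 - X) * p).coeff k = 0 := by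
  obtain ⟨j, rfl⟩ : ∃ j, k = j + 1 := ⟨k - 1, by omega⟩
  have hsymm : p.coeff j = p.coeff (j + 1) := by
    rw [← hp, coeff_reverse, revAt_le (by omega), hp]
    congr 1
    omega
  rw [coeff_one_sub_X_mul_succ, hsymm, sub_self]

variable [PartialOrder R]

theorem CoeffPosUpToHalf.nonneg_succ_of_reverse_eq {p : R[X]}
    (hrev : p.reverse = p) (h : CoeffPosUpToHalf p.natDegree ((1 - X) * p)) :
    CoeffNonnegUpToHalf (p.natDegree + 1) ((1 - X) * p) := by
  intro k hk
  rcases hk.lt_or_eq with hk | hk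
  · exact (h k (by omega)).le
  · exact (coeff_one_sub_X_mul_eq_zero_of_reverse_eq hrev hk).ge

/-- Palindromic, with positive jumps `a_k - a_{k-1}` (where `a_{-1} = 0`) up to the middle:
these jumps are the coefficients of `(1 - X) * p`. -/
def IsMountain (p : R[X]) : Prop :=
  p.reverse = p ∧ CoeffPosUpToHalf p.natDegree ((1 - X) * p)

theorem IsMountain.coeff_lt [IsOrderedRing R] {p : R[X]} (hp : IsMountain p) {i : ℕ}
    (hi : 2 * (i + 1) ≤ p.natDegree) : p.coeff i < p.coeff (i + 1) := by
  have hjump := hp.2 (i + 1) hi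
  rwa [coeff_one_sub_X_mul_succ, sub_pos] at hjump

theorem IsMountain.ne_zero {p : R[X]} (hp : IsMountain p) : p ≠ 0 :=
  right_ne_zero_of_mul hp.2.ne_zero

end Ring

section Factors

variable {R : Type*} [Semiring R] [Nontrivial R]

theorem reverse_one_add_X : (1 + X : R[X]).reverse = 1 + X := by
  have hdeg : (1 + X : R[X]).natDegree = 1 := by compute_degree!
  rw [reverse, hdeg, reflect_add, reflect_one, ← pow_one (X : R[X]), reflect_monomial]
  simp [add_comm]

theorem reverse_one_add_C_mul_X_add_X_sq (c : R) :
    (1 + C c * X + X ^ 2 : R[X]).reverse = 1 + C c * X + X ^ 2 := by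
  have hdeg : (1 + C c * X + X ^ 2 : R[X]).natDegree = 2 := by compute_degree!
  rw [reverse, hdeg, reflect_add, reflect_add, reflect_one, reflect_monomial,
    ← pow_one (X : R[X]), reflect_C_mul_X_pow]
  simp only [pow_one, Nat.one_le_ofNat, revAt_le, Nat.add_one_sub_one, le_refl, tsub_self,
    pow_zero]
  abel

theorem natDegree_one_add_X_mul [NoZeroDivisors R] {p : R[X]} (hp : p ≠ 0) :
    ((1 + X) * p).natDegree = p.natDegree + 1 := by
  have hdeg : (1 + X : R[X]).natDegree = 1 := by compute_degree!
  rw [natDegree_mul (fun h => by simp [h] at hdeg) hp, hdeg, add_comm]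

theorem natDegree_one_add_C_mul_X_add_X_sq_mul [NoZeroDivisors R] (c : R) {p : R[X]}
    (hp : p ≠ 0) :
    ((1 + C c * X + X ^ 2) * p).natDegree = p.natDegree + 2 := by
  have hdeg : (1 + C c * X + X ^ 2 : R[X]).natDegree = 2 := by compute_degree!
  rw [natDegree_mul (fun h => by simp [h] at hdeg) hp, hdeg, add_comm]

end Factors

section Mountain

variable {R : Type*} [CommRing R] [LinearOrder R] [IsStrictOrderedRing R]

theorem isMountain_one : IsMountain (1 : R[X]) := by
  refine ⟨by simpa using reverse_C (1 : R), ?_⟩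
  intro k hk
  obtain rfl : k = 0 := by simpa using hk
  simp

theorem IsMountain.one_add_X_mul {p : R[X]} (hp : IsMountain p) : IsMountain ((1 + X) * p) := by
  refine ⟨by rw [reverse_mul_of_domain, reverse_one_add_X, hp.1], ?_⟩
  rw [natDegree_one_add_X_mul hp.ne_zero, mul_left_comm]
  exact hp.2.one_add_X_mul (hp.2.nonneg_succ_of_reverse_eq hp.1)

theorem IsMountain.one_add_C_mul_X_add_X_sq_mul {p : R[X]} (hp : IsMountain p) {c : R}
    (hc : 2 ≤ c) : IsMountain ((1 + C c * X + X ^ 2) * p) := by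
  refine ⟨by rw [reverse_mul_of_domain, reverse_one_add_C_mul_X_add_X_sq, hp.1], ?_⟩
  have hsq := hp.one_add_X_mul.one_add_X_mul.2
  rw [natDegree_one_add_X_mul hp.one_add_X_mul.ne_zero, natDegree_one_add_X_mul hp.ne_zero]
    at hsq
  have hsplit : (1 - X) * ((1 + C c * X + X ^ 2) * p) =
      (1 - X) * ((1 + X) * ((1 + X) * p)) + C (c - 2) * (X * ((1 - X) * p)) := by
    rw [C_sub, map_ofNat]
    ring
  rw [natDegree_one_add_C_mul_X_add_X_sq_mul c hp.ne_zero, hsplit]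
  exact hsq.add_nonneg (hp.2.X_mul.C_mul (sub_nonneg.2 hc))

theorem isMountain_prod (L : List R[X])
    (hL : ∀ f ∈ L, f = 1 + X ∨ ∃ c : R, 2 ≤ c ∧ f = 1 + C c * X + X ^ 2) :
    IsMountain L.prod := by
  induction L with
  | nil => exact isMountain_one
  | cons f L ih =>
    rw [List.prod_cons]
    have hprod := ih fun g hg => hL g (List.mem_cons_of_mem f hg)
    obtain rfl | ⟨c, hc, rfl⟩ := hL f List.mem_cons_self
    · exact hprod.one_add_X_mul
    · exact hprod.one_add_C_mul_X_add_X_sq_mul hc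

end Mountain

end Polynomial

/-- Any polynomial that is a finite product of factors of the form `1 + t` and
`1 + c t + t²` with real `c ≥ 2` has the mountain property: its coefficients
strictly increase up to the middle, i.e. `a_i < a_{i+1}` whenever `i + 1 ≤ n/2`
(that is, `2*(i+1) ≤ n`), where `n` is the degree of the product. -/
theorem mountain_property (L : List (Polynomial ℝ))
    (hL : ∀ f ∈ L, f = 1 + X ∨ ∃ c : ℝ, 2 ≤ c ∧ f = 1 + C c * X + X ^ 2)
    (i : ℕ) (hi : 2 * (i + 1) ≤ L.prod.natDegree) :
    L.prod.coeff i < L.prod.coeff (i + 1) :=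
  (isMountain_prod L hL).coeff_lt hi
end

section
/- In the 2×2 matrix algebra over the algebra U(u(2)_ℏ) generated by t, x, y, z (with ℏ a scalar) with relations [x,y] = ℏ z, [y,z] = ℏ x, [z,x] = ℏ y, and t central, the matrix N = [[t - i z, -i x - y], [-i x + y, t + i z]] satisfies the Cayley-Hamilton-type identity N^2 - (2t + ℏ) N + (t^2 + x^2 + y^2 + z^2 + ℏ t) I = 0. -/
/-- In the algebra `U(u(2)_ℏ)` (relations `[x,y] = ℏ z`, `[y,z] = ℏ x`,
`[z,x] = ℏ y`, `t` central), the 2×2 generating matrix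
`N = [[t - i z, -i x - y], [-i x + y, t + i z]]` satisfies the Cayley–Hamilton
identity `N² - (2t + ℏ) N + (t² + x² + y² + z² + ℏ t) I = 0`. -/
theorem cayley_hamilton_uu2 (A : Type*) [Ring A] [Algebra ℂ A] (ℏ : ℂ)
    (t x y z : A)
    (hxy : x * y - y * x = ℏ • z)
    (hyz : y * z - z * y = ℏ • x)
    (hzx : z * x - x * z = ℏ • y)
    (htx : t * x = x * t) (hty : t * y = y * t) (htz : t * z = z * t) :
    let i : A := algebraMap ℂ A Complex.I
    let N : Matrix (Fin 2) (Fin 2) A :=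
      !![t - i * z, -(i * x) - y; -(i * x) + y, t + i * z]
    N * N - (2 * t + ℏ • (1 : A)) • N
      + (t ^ 2 + x ^ 2 + y ^ 2 + z ^ 2 + ℏ • t) • (1 : Matrix (Fin 2) (Fin 2) A)
      = 0 := by
  intro i N
  set M : ℂ → A := fun c => algebraMap ℂ A c with hM
  -- basic commuting lemmas
  have hMt : ∀ c : ℂ, t * M c = M c * t := fun c => (Algebra.commutes c t).symm
  have hMt2 : ∀ (c : ℂ) (w : A), t * (M c * w) = M c * (t * w) := by
    intro c w; rw [← mul_assoc, hMt, mul_assoc]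
  have hMx : ∀ c : ℂ, x * M c = M c * x := fun c => (Algebra.commutes c x).symm
  have hMx2 : ∀ (c : ℂ) (w : A), x * (M c * w) = M c * (x * w) := by
    intro c w; rw [← mul_assoc, hMx, mul_assoc]
  have hMy : ∀ c : ℂ, y * M c = M c * y := fun c => (Algebra.commutes c y).symm
  have hMy2 : ∀ (c : ℂ) (w : A), y * (M c * w) = M c * (y * w) := by
    intro c w; rw [← mul_assoc, hMy, mul_assoc]
  have hMz : ∀ c : ℂ, z * M c = M c * z := fun c => (Algebra.commutes c z).symm
  have hMz2 : ∀ (c : ℂ) (w : A), z * (M c * w) = M c * (z * w) := by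
    intro c w; rw [← mul_assoc, hMz, mul_assoc]
  have hMM : ∀ c d : ℂ, M c * M d = M (c * d) := fun c d => (map_mul _ c d).symm
  have hMM2 : ∀ (c d : ℂ) (w : A), M c * (M d * w) = M (c * d) * w := by
    intro c d w; rw [← mul_assoc, hMM]
  -- ordering lemmas
  have hyx : y * x = x * y - M ℏ * z := by
    rw [← Algebra.smul_def, ← hxy]; abel
  have hzy : z * y = y * z - M ℏ * x := by
    rw [← Algebra.smul_def, ← hyz]; abel
  have hzx' : z * x = x * z + M ℏ * y := by
    rw [← Algebra.smul_def]
    have := sub_eq_iff_eq_add.mp hzx; rw [this]; abel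
  have hyx2 : ∀ w, y * (x * w) = x * (y * w) - M ℏ * (z * w) := by
    intro w; rw [← mul_assoc, hyx, sub_mul, mul_assoc, mul_assoc]
  have hzy2 : ∀ w, z * (y * w) = y * (z * w) - M ℏ * (x * w) := by
    intro w; rw [← mul_assoc, hzy, sub_mul, mul_assoc, mul_assoc]
  have hzx2 : ∀ w, z * (x * w) = x * (z * w) + M ℏ * (y * w) := by
    intro w; rw [← mul_assoc, hzx', add_mul, mul_assoc, mul_assoc]
  have hxt : x * t = t * x := htx.symm
  have hyt : y * t = t * y := hty.symm
  have hzt : z * t = t * z := htz.symm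
  have hxt2 : ∀ w, x * (t * w) = t * (x * w) := by
    intro w; rw [← mul_assoc, hxt, mul_assoc]
  have hyt2 : ∀ w, y * (t * w) = t * (y * w) := by
    intro w; rw [← mul_assoc, hyt, mul_assoc]
  have hzt2 : ∀ w, z * (t * w) = t * (z * w) := by
    intro w; rw [← mul_assoc, hzt, mul_assoc]
  have hIh : Complex.I * ℏ = ℏ * Complex.I := mul_comm _ _
  have hMIhI : M (Complex.I * (ℏ * Complex.I)) = -(M ℏ) := by
    rw [show Complex.I * (ℏ * Complex.I) = -ℏ by rw [mul_comm ℏ Complex.I, ← mul_assoc, Complex.I_mul_I]; ring]; simp only [hM]; exact map_neg _ _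
  have hneg1 : M (-1 : ℂ) = -1 := by simp [hM]
  have hsmul : ∀ (c : ℂ) (a : A), c • a = M c * a := fun c a => Algebra.smul_def c a
  ext a b
  fin_cases a <;> fin_cases b <;>
    simp only [N, i, Fin.mk_zero, Fin.mk_one, Matrix.of_apply, Matrix.cons_val',
      Matrix.mul_apply, Fin.sum_univ_two, Matrix.smul_apply,
      Matrix.add_apply, Matrix.sub_apply, Matrix.zero_apply, Matrix.one_apply_eq,
      Matrix.one_apply_ne, Fin.isValue, Matrix.cons_val_zero,
      Matrix.cons_val_one, Matrix.head_cons, Matrix.head_fin_const,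
      Matrix.empty_val', Matrix.cons_val_fin_one, ne_eq, zero_ne_one,
      one_ne_zero, not_false_eq_true, smul_eq_mul, mul_zero, mul_one] <;>
    simp only [hsmul, hM] <;>
    simp only [← hM, pow_two, two_mul, mul_add, add_mul, mul_sub, sub_mul, neg_mul, mul_neg,
      mul_one, one_mul, mul_assoc, hMt, hMt2, hMx, hMx2, hMy, hMy2, hMz, hMz2,
      hMM, hMM2, hyx2, hzy2, hzx2, hyx, hzy, hzx',
      hxt, hyt, hzt, hxt2, hyt2, hzt2, Complex.I_mul_I, hIh, hMIhI, hneg1, neg_one_mul, map_one, one_mul, neg_neg] <;>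
    abel
end

section
/- The 4×4 matrix Π (with entries polynomial in Cas and ℏ as given) has characteristic polynomial (X - λ₀)²(X - λ₊)(X - λ₋), where λ₀ = (ℏ² - μ²)/4, λ± = (ℏ² - (μ ± 2ℏ)²)/4, and μ² = ℏ² - 4 Cas. Equivalently, tr Π = 2λ₀ + λ₊ + λ₋ and det Π = λ₀² λ₊ λ₋, together with the corresponding identities for the degree-2 and degree-3 symmetric functions. -/
open Polynomial

/-! Eliminating `Cas = (ℏ² - μ²)/4` turns the factorisation of `det (x - Π)` into a polynomial
identity in `ℏ`, `μ`, `x`. A field of characteristic zero is infinite, so the characteristic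
polynomial is determined by these values. -/

theorem Matrix.eta_fin_four {α : Type*} (A : Matrix (Fin 4) (Fin 4) α) :
    A = !![A 0 0, A 0 1, A 0 2, A 0 3;
           A 1 0, A 1 1, A 1 2, A 1 3;
           A 2 0, A 2 1, A 2 2, A 2 3;
           A 3 0, A 3 1, A 3 2, A 3 3] :=
  (Matrix.etaExpand_eq A).symm

section

variable {R : Type*} [Field R]

def piMatrix (ℏ Cas : R) : Matrix (Fin 4) (Fin 4) R :=
  !![Cas - 3 * ℏ ^ 2 / 2, ℏ ^ 2 / 2, -(2 * ℏ), 0;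
     3 * ℏ ^ 2 / 2, Cas - ℏ ^ 2 / 2, 2 * ℏ, 0;
     ℏ * Cas, 0, Cas - ℏ ^ 2 / 2, -ℏ;
     ℏ ^ 2 * Cas, -(ℏ ^ 2 / 2) * Cas, ℏ * (2 * Cas + ℏ ^ 2 / 4), Cas + ℏ ^ 2 / 2]

theorem det_scalar_sub_piMatrix [CharZero R] (ℏ μ x : R) :
    (Matrix.scalar (Fin 4) x - piMatrix ℏ ((ℏ ^ 2 - μ ^ 2) / 4)).det =
      (x - (ℏ ^ 2 - μ ^ 2) / 4) ^ 2 * (x - (ℏ ^ 2 - (μ + 2 * ℏ) ^ 2) / 4)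
        * (x - (ℏ ^ 2 - (μ - 2 * ℏ) ^ 2) / 4) := by
  rw [Matrix.eta_fin_four (_ - _)]
  simp only [norm_det]
  simp [piMatrix]
  ring

end

/-- The 4×4 matrix `Π` has characteristic polynomial
`(X - λ₀)²(X - λ₊)(X - λ₋)` where `λ₀ = (ℏ² - μ²)/4`,
`λ± = (ℏ² - (μ ± 2ℏ)²)/4` and `μ² = ℏ² - 4 Cas`. -/
theorem pi_charpoly (R : Type*) [Field R] [CharZero R] (ℏ Cas μ : R)
    (hμ : μ ^ 2 = ℏ ^ 2 - 4 * Cas) :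
    let Pi4 : Matrix (Fin 4) (Fin 4) R :=
      !![Cas - 3 * ℏ ^ 2 / 2, ℏ ^ 2 / 2, -(2 * ℏ), 0;
         3 * ℏ ^ 2 / 2, Cas - ℏ ^ 2 / 2, 2 * ℏ, 0;
         ℏ * Cas, 0, Cas - ℏ ^ 2 / 2, -ℏ;
         ℏ ^ 2 * Cas, -(ℏ ^ 2 / 2) * Cas, ℏ * (2 * Cas + ℏ ^ 2 / 4), Cas + ℏ ^ 2 / 2]
    let l₀ : R := (ℏ ^ 2 - μ ^ 2) / 4
    let lp : R := (ℏ ^ 2 - (μ + 2 * ℏ) ^ 2) / 4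
    let lm : R := (ℏ ^ 2 - (μ - 2 * ℏ) ^ 2) / 4
    Pi4.charpoly = (X - C l₀) ^ 2 * (X - C lp) * (X - C lm) := by
  intro Pi4 l₀ lp lm
  obtain rfl : Cas = (ℏ ^ 2 - μ ^ 2) / 4 := by rw [hμ]; ring
  refine Polynomial.funext fun x => ?_
  simp only [Matrix.eval_charpoly, eval_mul, eval_pow, eval_sub, eval_X, eval_C]
  exact det_scalar_sub_piMatrix ℏ μ x
end

section
/- In the Weyl-type algebra over U(u(2)_ℏ) with partial derivatives ∂_x, ∂_y, ∂_z, ∂̃_t satisfying the stated permutation relations, the derivatives pairwise commute and the operator Q = x∂_x + y∂_y + z∂_z satisfies Q Cas = ℏ Cas ∂̃_t + (Cas + ℏ²/4) Q as operators, where Cas = x² + y² + z². -/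
/-!
The Casimir `x² + y² + z²` is central in the algebra generated by `x, y, z`, so
`Q Cas = Σ xᵢ ∂ᵢ Cas = Cas Q + Σ xᵢ [∂ᵢ, Cas]`. Each `[∂ᵢ, Cas]` equals
`ℏ (xᵢ ∂̃_t + xⱼ ∂ₖ - xₖ ∂ⱼ) - (3ℏ²/4) ∂ᵢ` for `(i, j, k)` cyclic; summing against `xᵢ`,
the first terms give `ℏ Cas ∂̃_t` and the antisymmetric terms give `ℏ Σ [xᵢ, xⱼ] ∂ₖ = ℏ² Q`,
and `ℏ² - 3ℏ²/4 = ℏ²/4`.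
-/

section

variable {R A : Type*} [CommRing R] [Ring A] [Algebra R A]

theorem mul_sq_sub_sq_mul (a b : A) :
    a * b ^ 2 - b ^ 2 * a = (a * b - b * a) * b + b * (a * b - b * a) := by
  noncomm_ring

theorem commute_sq_add_sq_add_sq {c : R} {x y z : A}
    (hxy : x * y - y * x = c • z) (hzx : z * x - x * z = c • y) :
    Commute x (x ^ 2 + y ^ 2 + z ^ 2) := by
  have hxz : x * z - z * x = -(c • y) := by rw [← hzx, neg_sub]
  rw [Commute, SemiconjBy, ← sub_eq_zero]
  calc x * (x ^ 2 + y ^ 2 + z ^ 2) - (x ^ 2 + y ^ 2 + z ^ 2) * x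
      = (x * y ^ 2 - y ^ 2 * x) + (x * z ^ 2 - z ^ 2 * x) := by noncomm_ring
    _ = 0 := by
      rw [mul_sq_sub_sq_mul, mul_sq_sub_sq_mul, hxy, hxz]
      simp only [smul_mul_assoc, mul_smul_comm, neg_mul, mul_neg]
      abel

theorem mul_sq_add_sq_add_sq {h : R} {a b c da db dc dt : A}
    (haa : da * a - a * da = h • dt) (hab : da * b - b * da = h • dc)
    (hac : da * c - c * da = -(h • db)) (hta : dt * a - a * dt = -(h • da))
    (hcb : dc * b - b * dc = -(h • da)) (hbc : db * c - c * db = h • da) :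
    da * (a ^ 2 + b ^ 2 + c ^ 2) = (a ^ 2 + b ^ 2 + c ^ 2) * da +
      (2 * h) • (a * dt + b * dc - c * db) - (3 * h ^ 2) • da := by
  rw [add_sub_assoc, ← sub_eq_iff_eq_add']
  calc da * (a ^ 2 + b ^ 2 + c ^ 2) - (a ^ 2 + b ^ 2 + c ^ 2) * da
      = (da * a ^ 2 - a ^ 2 * da) + (da * b ^ 2 - b ^ 2 * da) + (da * c ^ 2 - c ^ 2 * da) := by
        noncomm_ring
    _ = _ := by
      rw [mul_sq_sub_sq_mul, mul_sq_sub_sq_mul, mul_sq_sub_sq_mul, haa, hab, hac]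
      simp only [smul_mul_assoc, mul_smul_comm, neg_mul, mul_neg, eq_add_of_sub_eq hta,
        eq_add_of_sub_eq hcb, eq_add_of_sub_eq hbc, smul_add, smul_neg]
      module

theorem mul_sub_mul_cyclic_sum {c : R} {x y z dx dy dz : A}
    (hxy : x * y - y * x = c • z) (hyz : y * z - z * y = c • x)
    (hzx : z * x - x * z = c • y) :
    x * (y * dz - z * dy) + y * (z * dx - x * dz) + z * (x * dy - y * dx) =
      c • (x * dx + y * dy + z * dz) := by
  calc x * (y * dz - z * dy) + y * (z * dx - x * dz) + z * (x * dy - y * dx)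
      = (y * z - z * y) * dx + (z * x - x * z) * dy + (x * y - y * x) * dz := by noncomm_ring
    _ = _ := by rw [hxy, hyz, hzx]; simp only [smul_mul_assoc, smul_add]

end

theorem Q_Cas_relation_general (A : Type*) [Ring A] [Algebra ℂ A] (ℏ : ℂ)
    (x y z dt dx dy dz : A)
    (hxy : x * y - y * x = ℏ • z)
    (hyz : y * z - z * y = ℏ • x)
    (hzx : z * x - x * z = ℏ • y)
    -- the partial derivatives pairwise commute
    (hdxy : dx * dy = dy * dx) (hdxz : dx * dz = dz * dx)
    (hdyz : dy * dz = dz * dy)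
    -- permutation relations of ∂̃_t with the generators
    (h2 : dt * x - x * dt = -((ℏ / 2) • dx))
    (h3 : dt * y - y * dt = -((ℏ / 2) • dy))
    (h4 : dt * z - z * dt = -((ℏ / 2) • dz))
    -- permutation relations of ∂_x with the generators
    (h6 : dx * x - x * dx = (ℏ / 2) • dt)
    (h7 : dx * y - y * dx = (ℏ / 2) • dz)
    (h8 : dx * z - z * dx = -((ℏ / 2) • dy))
    -- permutation relations of ∂_y with the generators
    (h10 : dy * x - x * dy = -((ℏ / 2) • dz))
    (h11 : dy * y - y * dy = (ℏ / 2) • dt)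
    (h12 : dy * z - z * dy = (ℏ / 2) • dx)
    -- permutation relations of ∂_z with the generators
    (h14 : dz * x - x * dz = (ℏ / 2) • dy)
    (h15 : dz * y - y * dz = -((ℏ / 2) • dx))
    (h16 : dz * z - z * dz = (ℏ / 2) • dt)
    :
    let Cas : A := x ^ 2 + y ^ 2 + z ^ 2
    let Q : A := x * dx + y * dy + z * dz
    (dx * dy = dy * dx ∧ dx * dz = dz * dx ∧ dy * dz = dz * dy) ∧
      Q * Cas = ℏ • (Cas * dt) + (Cas + (ℏ ^ 2 / 4) • (1 : A)) * Q := by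
  intro Cas Q
  refine ⟨⟨hdxy, hdxz, hdyz⟩, ?_⟩
  have hCas_y : Cas = y ^ 2 + z ^ 2 + x ^ 2 := add_rotate _ _ _
  have hCas_z : Cas = z ^ 2 + x ^ 2 + y ^ 2 := (add_rotate _ _ _).symm
  have hx : Commute x Cas := commute_sq_add_sq_add_sq hxy hzx
  have hy : Commute y Cas := hCas_y ▸ commute_sq_add_sq_add_sq hyz hxy
  have hz : Commute z Cas := hCas_z ▸ commute_sq_add_sq_add_sq hzx hyz
  have hdx : dx * Cas = Cas * dx + (2 * (ℏ / 2)) • (x * dt + y * dz - z * dy)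
      - (3 * (ℏ / 2) ^ 2) • dx := mul_sq_add_sq_add_sq h6 h7 h8 h2 h15 h12
  have hdy : dy * Cas = Cas * dy + (2 * (ℏ / 2)) • (y * dt + z * dx - x * dz)
      - (3 * (ℏ / 2) ^ 2) • dy := hCas_y ▸ mul_sq_add_sq_add_sq h11 h12 h10 h3 h8 h14
  have hdz : dz * Cas = Cas * dz + (2 * (ℏ / 2)) • (z * dt + x * dy - y * dx)
      - (3 * (ℏ / 2) ^ 2) • dz := hCas_z ▸ mul_sq_add_sq_add_sq h16 h14 h15 h4 h10 h7
  calc Q * Cas = x * (dx * Cas) + y * (dy * Cas) + z * (dz * Cas) := by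
        simp only [Q, add_mul, mul_assoc]
    _ = Cas * Q + ℏ • (Cas * dt)
          + ℏ • (x * (y * dz - z * dy) + y * (z * dx - x * dz) + z * (x * dy - y * dx))
          - (3 * (ℏ / 2) ^ 2) • Q := by
        rw [hdx, hdy, hdz]
        simp only [mul_add, mul_sub, mul_smul_comm, ← mul_assoc, hx.eq, hy.eq, hz.eq]
        simp only [Q, Cas, pow_two, mul_add, add_mul, mul_assoc]
        module
    _ = _ := by
      rw [mul_sub_mul_cyclic_sum hxy hyz hzx]
      simp only [add_mul, smul_mul_assoc, one_mul]
      module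

/-- In the Weyl-type algebra over `U(u(2)_ℏ)` the derivatives pairwise
commute and `Q Cas = ℏ Cas ∂̃_t + (Cas + ℏ²/4) Q` as operators, where
`Q = x∂_x + y∂_y + z∂_z` and `Cas = x² + y² + z²`. -/
theorem Q_Cas_relation (A : Type*) [Ring A] [Algebra ℂ A] (ℏ : ℂ)
    (t x y z dt dx dy dz : A)
    (hxy : x * y - y * x = ℏ • z)
    (hyz : y * z - z * y = ℏ • x)
    (hzx : z * x - x * z = ℏ • y)
    (htx : t * x = x * t) (hty : t * y = y * t) (htz : t * z = z * t)
    -- the partial derivatives pairwise commute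
    (hdxy : dx * dy = dy * dx) (hdxz : dx * dz = dz * dx)
    (hdyz : dy * dz = dz * dy)
    (hdtx : dt * dx = dx * dt) (hdty : dt * dy = dy * dt)
    (hdtz : dt * dz = dz * dt)
    -- permutation relations of ∂̃_t with the generators
    (h1 : dt * t - t * dt = (ℏ / 2) • dt)
    (h2 : dt * x - x * dt = -((ℏ / 2) • dx))
    (h3 : dt * y - y * dt = -((ℏ / 2) • dy))
    (h4 : dt * z - z * dt = -((ℏ / 2) • dz))
    -- permutation relations of ∂_x with the generators
    (h5 : dx * t - t * dx = (ℏ / 2) • dx)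
    (h6 : dx * x - x * dx = (ℏ / 2) • dt)
    (h7 : dx * y - y * dx = (ℏ / 2) • dz)
    (h8 : dx * z - z * dx = -((ℏ / 2) • dy))
    -- permutation relations of ∂_y with the generators
    (h9 : dy * t - t * dy = (ℏ / 2) • dy)
    (h10 : dy * x - x * dy = -((ℏ / 2) • dz))
    (h11 : dy * y - y * dy = (ℏ / 2) • dt)
    (h12 : dy * z - z * dy = (ℏ / 2) • dx)
    -- permutation relations of ∂_z with the generators
    (h13 : dz * t - t * dz = (ℏ / 2) • dz)
    (h14 : dz * x - x * dz = (ℏ / 2) • dy)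
    (h15 : dz * y - y * dz = -((ℏ / 2) • dx))
    (h16 : dz * z - z * dz = (ℏ / 2) • dt)
    :
    let Cas : A := x ^ 2 + y ^ 2 + z ^ 2
    let Q : A := x * dx + y * dy + z * dz
    (dx * dy = dy * dx ∧ dx * dz = dz * dx ∧ dy * dz = dz * dy) ∧
      Q * Cas = ℏ • (Cas * dt) + (Cas + (ℏ ^ 2 / 4) • (1 : A)) * Q :=
  Q_Cas_relation_general A ℏ x y z dt dx dy dz hxy hyz hzx hdxy hdxz hdyz h2 h3 h4 h6 h7 h8 h10 h11
    h12 h14 h15 h16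
end

section
/- In the same Weyl-type algebra, ∂̃_t Cas = (Cas - 3ℏ²/4) ∂̃_t - ℏ Q, where Cas = x² + y² + z² and Q = x∂_x + y∂_y + z∂_z. -/
theorem mul_sq_eq_of_commutators {R A : Type*} [CommRing R] [Ring A] [Algebra R A]
    (c : R) {a d e : A} (hd : d * a - a * d = -(c • e)) (he : e * a - a * e = c • d) :
    d * a ^ 2 = a ^ 2 * d - c ^ 2 • d - (2 * c) • (a * e) := by
  rw [sub_eq_iff_eq_add] at hd he
  rw [sq, ← mul_assoc, hd]
  simp only [add_mul, mul_add, neg_mul, mul_neg, smul_mul_assoc, mul_smul_comm, mul_assoc, hd, he,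
    smul_add, smul_smul]
  module

theorem dt_Cas_relation_general (A : Type*) [Ring A] [Algebra ℂ A] (ℏ : ℂ)
    (x y z dt dx dy dz : A)
    -- permutation relations of ∂̃_t with the generators
    (h2 : dt * x - x * dt = -((ℏ / 2) • dx))
    (h3 : dt * y - y * dt = -((ℏ / 2) • dy))
    (h4 : dt * z - z * dt = -((ℏ / 2) • dz))
    -- permutation relations of ∂_x with the generators
    (h6 : dx * x - x * dx = (ℏ / 2) • dt)
    -- permutation relations of ∂_y with the generators
    (h11 : dy * y - y * dy = (ℏ / 2) • dt)
    -- permutation relations of ∂_z with the generators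
    (h16 : dz * z - z * dz = (ℏ / 2) • dt)
    :
    let Cas : A := x ^ 2 + y ^ 2 + z ^ 2
    let Q : A := x * dx + y * dy + z * dz
    dt * Cas = (Cas - (3 * ℏ ^ 2 / 4) • (1 : A)) * dt - ℏ • Q := by
  intro Cas Q
  simp only [Cas, Q, mul_add, mul_sq_eq_of_commutators _ h2 h6, mul_sq_eq_of_commutators _ h3 h11,
    mul_sq_eq_of_commutators _ h4 h16, sub_mul, add_mul, smul_mul_assoc, one_mul]
  module

/-- In the Weyl-type algebra over `U(u(2)_ℏ)`,
`∂̃_t Cas = (Cas - 3ℏ²/4) ∂̃_t - ℏ Q`, where `Cas = x² + y² + z²` and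
`Q = x∂_x + y∂_y + z∂_z`. -/
theorem dt_Cas_relation (A : Type*) [Ring A] [Algebra ℂ A] (ℏ : ℂ)
    (t x y z dt dx dy dz : A)
    (hxy : x * y - y * x = ℏ • z)
    (hyz : y * z - z * y = ℏ • x)
    (hzx : z * x - x * z = ℏ • y)
    (htx : t * x = x * t) (hty : t * y = y * t) (htz : t * z = z * t)
    -- the partial derivatives pairwise commute
    (hdxy : dx * dy = dy * dx) (hdxz : dx * dz = dz * dx)
    (hdyz : dy * dz = dz * dy)
    (hdtx : dt * dx = dx * dt) (hdty : dt * dy = dy * dt)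
    (hdtz : dt * dz = dz * dt)
    -- permutation relations of ∂̃_t with the generators
    (h1 : dt * t - t * dt = (ℏ / 2) • dt)
    (h2 : dt * x - x * dt = -((ℏ / 2) • dx))
    (h3 : dt * y - y * dt = -((ℏ / 2) • dy))
    (h4 : dt * z - z * dt = -((ℏ / 2) • dz))
    -- permutation relations of ∂_x with the generators
    (h5 : dx * t - t * dx = (ℏ / 2) • dx)
    (h6 : dx * x - x * dx = (ℏ / 2) • dt)
    (h7 : dx * y - y * dx = (ℏ / 2) • dz)
    (h8 : dx * z - z * dx = -((ℏ / 2) • dy))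
    -- permutation relations of ∂_y with the generators
    (h9 : dy * t - t * dy = (ℏ / 2) • dy)
    (h10 : dy * x - x * dy = -((ℏ / 2) • dz))
    (h11 : dy * y - y * dy = (ℏ / 2) • dt)
    (h12 : dy * z - z * dy = (ℏ / 2) • dx)
    -- permutation relations of ∂_z with the generators
    (h13 : dz * t - t * dz = (ℏ / 2) • dz)
    (h14 : dz * x - x * dz = (ℏ / 2) • dy)
    (h15 : dz * y - y * dz = -((ℏ / 2) • dx))
    (h16 : dz * z - z * dz = (ℏ / 2) • dt)
    :
    let Cas : A := x ^ 2 + y ^ 2 + z ^ 2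
    let Q : A := x * dx + y * dy + z * dz
    dt * Cas = (Cas - (3 * ℏ ^ 2 / 4) • (1 : A)) * dt - ℏ • Q :=
  dt_Cas_relation_general A ℏ x y z dt dx dy dz h2 h3 h4 h6 h11 h16
end
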